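/- Let λ and β be positive random variables on a probability space (Ω, 𝓕, ℙ) satisfying 𝔼[(β/λ^{1/β}) ((β+1)/β)^{(β+1)/β}] < ∞, 𝔼[λ] < ∞ and 𝔼[λβ] < ∞. If ℙ(β = 1) > 0 and ℙ(β < 1) = 0, then the mixed Kies density f(t) = 𝔼[h(t; λ, β)] tends, as t → 0+, to 𝔼[λ · 1_{β = 1}] (equivalently, to ℚ(β = 1)·𝔼[λ], where ℚ is the probability measure with Radon–Nikodym derivative dℚ/dℙ = λ/𝔼[λ]). -/

import Mathlib

/-!
Since `β ≥ 1` almost surely, for `0 < t ≤ 1/2` one has `t ^ (β - 1) ≤ (1 - t) ^ (β - 1)`, so the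
Kies density is bounded by `4 λ β`, which is integrable. Dominated convergence then lets `t → 0+`
pass under the expectation, and pointwise `h(t; λ, β)` tends to `λ` when `β = 1` and to `0` when
`β > 1`.
-/

open MeasureTheory Filter Set Topology

noncomputable def kiesDensity (lam beta t : ℝ) : ℝ :=
  lam * beta * t ^ (beta - 1) * (1 - t) ^ (-(beta + 1)) *
    Real.exp (-lam * (t / (1 - t)) ^ beta)

lemma measurable_kiesDensity_uncurry (t : ℝ) :
    Measurable fun p : ℝ × ℝ => kiesDensity p.1 p.2 t := by
  unfold kiesDensity; fun_prop

lemma continuousAt_kiesDensity_zero {lam beta : ℝ} (hbeta : 1 ≤ beta) :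
    ContinuousAt (kiesDensity lam beta) 0 := by
  unfold kiesDensity
  have : (1 : ℝ) - 0 ≠ 0 := by norm_num
  fun_prop (disch := first | assumption | (right; linarith) | (left; norm_num))

-- at `β = 1` the factor `t ^ (β - 1)` is `0 ^ 0 = 1`
lemma kiesDensity_zero {lam beta : ℝ} (hbeta : 1 ≤ beta) :
    kiesDensity lam beta 0 = if beta = 1 then lam else 0 := by
  split_ifs with h
  · simp [kiesDensity, h]
  · simp [kiesDensity, Real.zero_rpow (sub_ne_zero.2 h), Real.zero_rpow (by linarith : beta ≠ 0)]

lemma kiesDensity_nonneg {lam beta t : ℝ} (hlam : 0 ≤ lam) (hbeta : 0 ≤ beta) (ht₀ : 0 ≤ t)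
    (ht₁ : t ≤ 1) : 0 ≤ kiesDensity lam beta t := by
  have := Real.rpow_nonneg ht₀ (beta - 1)
  have := Real.rpow_nonneg (sub_nonneg.2 ht₁) (-(beta + 1))
  unfold kiesDensity; positivity

lemma kiesDensity_le {lam beta t : ℝ} (hlam : 0 ≤ lam) (hbeta : 1 ≤ beta) (ht₀ : 0 ≤ t)
    (ht : t ≤ 1 / 2) : kiesDensity lam beta t ≤ 4 * (lam * beta) := by
  have h1t : 0 < 1 - t := by linarith
  have hexp : Real.exp (-lam * (t / (1 - t)) ^ beta) ≤ 1 := by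
    have := Real.rpow_nonneg (div_nonneg ht₀ h1t.le) beta
    exact Real.exp_le_one_iff.2 (by nlinarith)
  -- `t ≤ 1 - t` trades the singular factor `t ^ (β - 1)` for a power of `1 - t`
  have hpow : t ^ (beta - 1) * (1 - t) ^ (-(beta + 1)) ≤ 4 :=
    calc t ^ (beta - 1) * (1 - t) ^ (-(beta + 1))
        ≤ (1 - t) ^ (beta - 1) * (1 - t) ^ (-(beta + 1)) := by
          gcongr
          linarith
      _ = ((1 - t) ^ 2)⁻¹ := by
          rw [← Real.rpow_add h1t, show beta - 1 + -(beta + 1) = -(2 : ℕ) by ring,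
            Real.rpow_neg h1t.le, Real.rpow_natCast]
      _ ≤ 4 := by
          rw [inv_le_comm₀ (by positivity) (by norm_num)]; nlinarith
  have hlb : 0 ≤ lam * beta := by positivity
  calc kiesDensity lam beta t
      = lam * beta * (t ^ (beta - 1) * (1 - t) ^ (-(beta + 1))) *
          Real.exp (-lam * (t / (1 - t)) ^ beta) := by unfold kiesDensity; ring
    _ ≤ lam * beta * 4 * 1 := by gcongr
    _ = 4 * (lam * beta) := by ring

lemma tendsto_kiesDensity_nhdsGT_zero {lam beta : ℝ} (hbeta : 1 ≤ beta) :
    Tendsto (kiesDensity lam beta) (𝓝[>] 0) (𝓝 (if beta = 1 then lam else 0)) := by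
  rw [← kiesDensity_zero hbeta]
  exact (continuousAt_kiesDensity_zero hbeta).tendsto.mono_left nhdsWithin_le_nhds

theorem tendsto_integral_kiesDensity_nhdsGT_zero {Ω : Type*} [MeasurableSpace Ω] {μ : Measure Ω}
    {lam beta : Ω → ℝ} (hlam_meas : AEMeasurable lam μ) (hbeta_meas : AEMeasurable beta μ)
    (hlam : ∀ᵐ ω ∂μ, 0 ≤ lam ω) (hbeta : ∀ᵐ ω ∂μ, 1 ≤ beta ω)
    (hint : Integrable (fun ω => lam ω * beta ω) μ) :
    Tendsto (fun t => ∫ ω, kiesDensity (lam ω) (beta ω) t ∂μ) (𝓝[>] 0)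
      (𝓝 (∫ ω in {ω | beta ω = 1}, lam ω ∂μ)) := by
  have hS : NullMeasurableSet {ω | beta ω = 1} μ :=
    nullMeasurableSet_eq_fun hbeta_meas aemeasurable_const
  rw [← integral_indicator₀ hS]
  have hnear : ∀ᶠ t in 𝓝[>] (0 : ℝ), t ∈ Ioc 0 (1 / 2) := Ioc_mem_nhdsGT (by norm_num)
  refine tendsto_integral_filter_of_dominated_convergence (fun ω => 4 * (lam ω * beta ω))
    (Eventually.of_forall fun t => ((measurable_kiesDensity_uncurry t).comp_aemeasurable
      (hlam_meas.prodMk hbeta_meas)).aestronglyMeasurable) ?_ (hint.const_mul 4) ?_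
  · filter_upwards [hnear] with t ht
    filter_upwards [hlam, hbeta] with ω hl hb
    rw [Real.norm_of_nonneg (kiesDensity_nonneg hl (by linarith) ht.1.le (by linarith [ht.2]))]
    exact kiesDensity_le hl hb ht.1.le ht.2
  · filter_upwards [hbeta] with ω hb
    simpa only [indicator_apply, mem_ofPred_eq] using tendsto_kiesDensity_nhdsGT_zero hb

theorem mixed_kies_density_left_endpoint_beta_eq_one_general
    {Ω : Type*} [MeasurableSpace Ω] (μ : Measure Ω)
    (lam beta : Ω → ℝ) (hlam_meas : Measurable lam) (hbeta_meas : Measurable beta)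
    (hlam_pos : ∀ ω, 0 < lam ω)
    (hcond3 : Integrable (fun ω => lam ω * beta ω) μ)
    (hbeta_lt : μ {ω | beta ω < 1} = 0)
    (f : ℝ → ℝ)
    (hf : ∀ t, f t = ∫ ω, lam ω * beta ω * t ^ (beta ω - 1) * (1 - t) ^ (-(beta ω + 1)) *
        Real.exp (-(lam ω) * (t / (1 - t)) ^ (beta ω)) ∂μ) :
    Tendsto f (nhdsWithin 0 (Set.Ioi 0)) (nhds (∫ ω in {ω | beta ω = 1}, lam ω ∂μ)) := by
  have hbeta : ∀ᵐ ω ∂μ, 1 ≤ beta ω := by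
    simpa only [ae_iff, not_le] using hbeta_lt
  rw [funext hf]
  exact tendsto_integral_kiesDensity_nhdsGT_zero hlam_meas.aemeasurable hbeta_meas.aemeasurable
    (Eventually.of_forall fun ω => (hlam_pos ω).le) hbeta hcond3

theorem mixed_kies_density_left_endpoint_beta_eq_one
    {Ω : Type*} [MeasurableSpace Ω] (μ : Measure Ω) [IsProbabilityMeasure μ]
    (lam beta : Ω → ℝ) (hlam_meas : Measurable lam) (hbeta_meas : Measurable beta)
    (hlam_pos : ∀ ω, 0 < lam ω) (hbeta_pos : ∀ ω, 0 < beta ω)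
    (hcond1 : Integrable (fun ω =>
        beta ω / lam ω ^ (1 / beta ω) *
          ((beta ω + 1) / beta ω) ^ ((beta ω + 1) / beta ω)) μ)
    (hcond2 : Integrable lam μ)
    (hcond3 : Integrable (fun ω => lam ω * beta ω) μ)
    (hbeta_eq : 0 < μ {ω | beta ω = 1})
    (hbeta_lt : μ {ω | beta ω < 1} = 0)
    (f : ℝ → ℝ)
    (hf : ∀ t, f t = ∫ ω, lam ω * beta ω * t ^ (beta ω - 1) * (1 - t) ^ (-(beta ω + 1)) *
        Real.exp (-(lam ω) * (t / (1 - t)) ^ (beta ω)) ∂μ) :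
    Tendsto f (nhdsWithin 0 (Set.Ioi 0)) (nhds (∫ ω in {ω | beta ω = 1}, lam ω ∂μ)) :=
  mixed_kies_density_left_endpoint_beta_eq_one_general μ lam beta hlam_meas hbeta_meas hlam_pos
    hcond3 hbeta_lt f hf
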